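/- Relation between the TSLS and OLS estimands: let H be a real Hilbert space, X a complete subspace, and y, d, z ∈ H such that y^{⊥X}, d^{⊥X}, z^{⊥X} are nonzero, ⟨d^{⊥X}, z^{⊥X}⟩ ≠ 0, d^{⊥X+span(z)} ≠ 0, y^{⊥X+span(z)+span(d)} ≠ 0, and z^{⊥X+span(d)} ≠ 0. Then the TSLS estimand β_{TSLS} := ⟨y^{⊥X}, z^{⊥X}⟩/⟨d^{⊥X}, z^{⊥X}⟩ satisfies β_{TSLS} = β_{y∼d|X+span(z)} + (f_{y∼z|X+span(d)}/R_{d∼z|X})·σ_{y∼X+span(z)+span(d)}/σ_{d∼X+span(z)}. -/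

import Mathlib

/-!
R²-calculus in real Hilbert spaces (Freidling & Zhao, "Optimization-based
Sensitivity Analysis for Unmeasured Confounding using Partial Correlations").
-/

noncomputable section

open Submodule RealInnerProductSpace

variable {H : Type*} [NormedAddCommGroup H] [InnerProductSpace ℝ H]

/-- The residual `h^{⊥M} = h − P_M h` of `h` after projecting onto `M`. -/
def resid (M : Submodule ℝ H) [HasOrthogonalProjection M] (h : H) : H :=
  h - (orthogonalProjection M h : H)

/-- The marginal R²-value `R²_{y∼X} = 1 − ‖y^{⊥X}‖²/‖y‖²`. -/
def R2 (y : H) (X : Submodule ℝ H) [HasOrthogonalProjection X] : ℝ :=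
  1 - ‖resid X y‖ ^ 2 / ‖y‖ ^ 2

/-- The partial R²-value `R²_{y∼X|Z} = (R²_{y∼X+Z} − R²_{y∼Z})/(1 − R²_{y∼Z})`. -/
def R2p (y : H) (X Z : Submodule ℝ H) [HasOrthogonalProjection (X ⊔ Z)]
    [HasOrthogonalProjection Z] : ℝ :=
  (R2 y (X ⊔ Z) - R2 y Z) / (1 - R2 y Z)

/-- The partial R-value `R_{y∼x|Z} = ⟪y^{⊥Z}, x^{⊥Z}⟫/(‖y^{⊥Z}‖·‖x^{⊥Z}‖)`. -/
def Rp (y x : H) (Z : Submodule ℝ H) [HasOrthogonalProjection Z] : ℝ :=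
  ⟪resid Z y, resid Z x⟫ / (‖resid Z y‖ * ‖resid Z x‖)

/-- The partial f-value `f_{y∼x|Z} = R_{y∼x|Z}/√(1 − R²_{y∼x|Z})`. -/
def fp (y x : H) (Z : Submodule ℝ H) [HasOrthogonalProjection Z] : ℝ :=
  Rp y x Z / Real.sqrt (1 - Rp y x Z ^ 2)

/-- The regression estimand `β_{y∼d|M} = ⟪y^{⊥M}, d^{⊥M}⟫/‖d^{⊥M}‖²`. -/
def betaReg (y d : H) (M : Submodule ℝ H) [HasOrthogonalProjection M] : ℝ :=
  ⟪resid M y, resid M d⟫ / ‖resid M d‖ ^ 2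

/-- `σ_{y∼M} = ‖y^{⊥M}‖`. -/
def sigv (y : H) (M : Submodule ℝ H) [HasOrthogonalProjection M] : ℝ :=
  ‖resid M y‖

/-!
Write `Y, D, Z` for the residuals of `y, d, z` after `X`. Adding one regressor `z` to `X` acts on
residuals as a projection onto a line, `h^{⊥X+z} = h^{⊥X} − (⟪h^{⊥X}, Z⟫/‖Z‖²) Z`
(Frisch–Waugh–Lovell), so every quantity in the statement is a rational function of the Gram
matrix of `Y, D, Z`. Two identities then give the result. The normal equation of the regression of
`Y` on `D, Z` reads `⟪Y, Z⟫ = β_{y∼d|X+z} ⟪D, Z⟫ + β_{y∼z|X+d} ‖Z‖²`; dividing by `⟪D, Z⟫` produces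
the OLS term. For the rest, `f_{y∼z|W} σ_{y∼W+z} = β_{y∼z|W} σ_{z∼W}` with `W = X + d`, and
`σ_{d∼X+z} ‖Z‖ = σ_{z∼X+d} ‖D‖`, both squares being the Gram determinant of `D, Z`.
-/

section Residual

variable (M : Submodule ℝ H) [HasOrthogonalProjection M]

theorem resid_mem_orthogonal (h : H) : resid M h ∈ Mᗮ :=
  sub_starProjection_mem_orthogonal h

theorem inner_resid_right_of_mem_orthogonal {v : H} (hv : v ∈ Mᗮ) (h : H) :
    ⟪v, resid M h⟫ = ⟪v, h⟫ := by
  rw [resid, inner_sub_right,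
    inner_left_of_mem_orthogonal (coe_mem _) hv, sub_zero]

theorem inner_resid_resid (a b : H) : ⟪resid M a, resid M b⟫ = ⟪resid M a, b⟫ :=
  inner_resid_right_of_mem_orthogonal M (resid_mem_orthogonal M a) b

theorem resid_eq_zero_iff {h : H} : resid M h = 0 ↔ h ∈ M := by
  rw [resid, sub_eq_zero, eq_comm]
  exact starProjection_eq_self_iff

variable {M} in
theorem resid_ne_zero_of_le {N : Submodule ℝ H} [HasOrthogonalProjection N] (hMN : M ≤ N) {h : H}
    (hN : resid N h ≠ 0) : resid M h ≠ 0 :=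
  fun hM ↦ hN ((resid_eq_zero_iff N).2 (hMN ((resid_eq_zero_iff M).1 hM)))

variable {M} in
theorem resid_congr {N : Submodule ℝ H} [HasOrthogonalProjection N] (hMN : M = N) (h : H) :
    resid M h = resid N h := by
  subst hMN; rfl

theorem inner_resid_sub_smul_resid_eq_zero (z h : H) :
    ⟪resid M h - (⟪resid M h, resid M z⟫ / ‖resid M z‖ ^ 2) • resid M z, resid M z⟫ = 0 := by
  rw [inner_sub_left, real_inner_smul_left, real_inner_self_eq_norm_sq, sub_eq_zero]
  by_cases hz : resid M z = 0
  · simp [hz]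
  · field_simp

end Residual

section AddRegressor

variable (M : Submodule ℝ H) [HasOrthogonalProjection M] (z : H)
  [HasOrthogonalProjection (M ⊔ ℝ ∙ z)]

theorem resid_sup_span_singleton (h : H) :
    resid (M ⊔ ℝ ∙ z) h =
      resid M h - (⟪resid M h, resid M z⟫ / ‖resid M z‖ ^ 2) • resid M z := by
  set c := ⟪resid M h, resid M z⟫ / ‖resid M z‖ ^ 2
  have hz_mem : resid M z ∈ M ⊔ ℝ ∙ z :=
    sub_mem (mem_sup_right (mem_span_singleton_self z)) (mem_sup_left (coe_mem _))
  have horth : resid M h - c • resid M z ∈ (M ⊔ ℝ ∙ z)ᗮ := by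
    have hM : resid M h - c • resid M z ∈ Mᗮ :=
      sub_mem (resid_mem_orthogonal M h) (smul_mem _ c (resid_mem_orthogonal M z))
    rw [← inf_orthogonal]
    refine ⟨hM, mem_orthogonal_singleton_iff_inner_left.2 ?_⟩
    rw [← inner_resid_right_of_mem_orthogonal M hM]
    exact inner_resid_sub_smul_resid_eq_zero M z h
  have hproj : (M ⊔ ℝ ∙ z).starProjection h = M.starProjection h + c • resid M z :=
    eq_starProjection_of_mem_orthogonal'
      (add_mem (mem_sup_left (coe_mem _)) (smul_mem _ c hz_mem)) horth
      (by simp only [resid, starProjection_apply]; abel)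
  simp only [resid, ← starProjection_apply, hproj]
  abel

theorem inner_resid_sup_span_singleton (a b : H) :
    ⟪resid (M ⊔ ℝ ∙ z) a, resid (M ⊔ ℝ ∙ z) b⟫ =
      ⟪resid M a, resid M b⟫ - ⟪resid M a, resid M z⟫ * ⟪resid M b, resid M z⟫ / ‖resid M z‖ ^ 2 := by
  rw [inner_resid_resid, resid_sup_span_singleton, inner_sub_left, real_inner_smul_left,
    ← inner_resid_resid M a b, ← inner_resid_resid M z b,
    real_inner_comm (resid M b) (resid M z)]
  ring

theorem norm_sq_resid_sup_span_singleton (h : H) :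
    ‖resid (M ⊔ ℝ ∙ z) h‖ ^ 2 = ‖resid M h‖ ^ 2 - ⟪resid M h, resid M z⟫ ^ 2 / ‖resid M z‖ ^ 2 := by
  have := inner_resid_sup_span_singleton M z h h
  rw [real_inner_self_eq_norm_sq, real_inner_self_eq_norm_sq] at this
  rw [this, sq ⟪resid M h, resid M z⟫]

theorem norm_sq_resid_sup_span_singleton_mul (h : H) :
    ‖resid (M ⊔ ℝ ∙ z) h‖ ^ 2 * ‖resid M z‖ ^ 2 =
      ‖resid M h‖ ^ 2 * ‖resid M z‖ ^ 2 - ⟪resid M h, resid M z⟫ ^ 2 := by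
  rw [norm_sq_resid_sup_span_singleton]
  by_cases hz : resid M z = 0
  · simp [hz]
  · field_simp

theorem one_sub_Rp_sq {y : H} (hy : resid M y ≠ 0) :
    1 - Rp y z M ^ 2 = ‖resid (M ⊔ ℝ ∙ z) y‖ ^ 2 / ‖resid M y‖ ^ 2 := by
  rw [norm_sq_resid_sup_span_singleton, Rp, div_pow, mul_pow, sub_div,
    div_self (pow_ne_zero 2 (norm_ne_zero_iff.2 hy)), div_div, mul_comm (‖resid M z‖ ^ 2)]

theorem fp_mul_sigv_sup_span_singleton {y : H} (hyz : resid (M ⊔ ℝ ∙ z) y ≠ 0)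
    (hz : resid M z ≠ 0) :
    fp y z M * sigv y (M ⊔ ℝ ∙ z) = betaReg y z M * sigv z M := by
  have hy := resid_ne_zero_of_le le_sup_left hyz
  have hsqrt : √(1 - Rp y z M ^ 2) = ‖resid (M ⊔ ℝ ∙ z) y‖ / ‖resid M y‖ := by
    rw [one_sub_Rp_sq M z hy, ← div_pow, Real.sqrt_sq (by positivity)]
  have hY := norm_ne_zero_iff.2 hy
  have hZ := norm_ne_zero_iff.2 hz
  have hYZ := norm_ne_zero_iff.2 hyz
  rw [fp, hsqrt, Rp, sigv, betaReg, sigv]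
  field_simp

end AddRegressor

section TwoRegressors

variable (M : Submodule ℝ H) [HasOrthogonalProjection M] (d z : H)
  [HasOrthogonalProjection (M ⊔ ℝ ∙ z)] [HasOrthogonalProjection (M ⊔ ℝ ∙ d)]

theorem norm_resid_sup_span_singleton_mul_comm :
    ‖resid (M ⊔ ℝ ∙ z) d‖ * ‖resid M z‖ = ‖resid (M ⊔ ℝ ∙ d) z‖ * ‖resid M d‖ := by
  rw [← pow_left_inj₀ (by positivity) (by positivity) two_ne_zero, mul_pow, mul_pow,
    norm_sq_resid_sup_span_singleton_mul, norm_sq_resid_sup_span_singleton_mul,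
    real_inner_comm]
  ring

theorem inner_resid_eq_betaReg_add_betaReg (y : H) (hdz : resid (M ⊔ ℝ ∙ z) d ≠ 0)
    (hzd : resid (M ⊔ ℝ ∙ d) z ≠ 0) :
    ⟪resid M y, resid M z⟫ =
      betaReg y d (M ⊔ ℝ ∙ z) * ⟪resid M d, resid M z⟫ +
        betaReg y z (M ⊔ ℝ ∙ d) * ‖resid M z‖ ^ 2 := by
  have hD := norm_ne_zero_iff.2 (resid_ne_zero_of_le le_sup_left hdz)
  have hZ := norm_ne_zero_iff.2 (resid_ne_zero_of_le le_sup_left hzd)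
  have hDZ := norm_ne_zero_iff.2 hdz
  have hZD := norm_ne_zero_iff.2 hzd
  have hV := norm_sq_resid_sup_span_singleton_mul M z d
  have hW := norm_sq_resid_sup_span_singleton_mul M d z
  rw [betaReg, betaReg, inner_resid_sup_span_singleton, inner_resid_sup_span_singleton,
    real_inner_comm (resid M d) (resid M z)]
  rw [real_inner_comm (resid M d) (resid M z)] at hW
  field_simp
  set a := ⟪resid M y, resid M z⟫
  set b := ⟪resid M d, resid M z⟫
  set c := ⟪resid M y, resid M d⟫
  -- Both `‖d^{⊥M+z}‖²‖Z‖²` and `‖z^{⊥M+d}‖²‖D‖²` equal the Gram determinant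
  -- `G = ‖D‖²‖Z‖² − b²`; the coefficients expand the goal around `G`.
  linear_combination
    (a * ‖resid (M ⊔ ℝ ∙ z) d‖ ^ 2 * ‖resid M z‖ ^ 2 - b * (c * ‖resid M z‖ ^ 2 - a * b)) * hW +
      (a * (‖resid M d‖ ^ 2 * ‖resid M z‖ ^ 2 - b ^ 2) -
        ‖resid M z‖ ^ 2 * (a * ‖resid M d‖ ^ 2 - c * b)) * hV

end TwoRegressors

theorem tsls_ols_relation_general
    (X : Submodule ℝ H) [CompleteSpace X] (y d z : H)
    [CompleteSpace ↥(X ⊔ (ℝ ∙ z))] [CompleteSpace ↥(X ⊔ (ℝ ∙ d))]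
    [CompleteSpace ↥(X ⊔ (ℝ ∙ z) ⊔ (ℝ ∙ d))]
    (hd : resid X d ≠ 0) (hz : resid X z ≠ 0)
    (hdz : ⟪resid X d, resid X z⟫ ≠ 0)
    (hd2 : resid (X ⊔ (ℝ ∙ z)) d ≠ 0)
    (hy3 : resid (X ⊔ (ℝ ∙ z) ⊔ (ℝ ∙ d)) y ≠ 0)
    (hz2 : resid (X ⊔ (ℝ ∙ d)) z ≠ 0) :
    ⟪resid X y, resid X z⟫ / ⟪resid X d, resid X z⟫ =
      betaReg y d (X ⊔ (ℝ ∙ z)) +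
        fp y z (X ⊔ (ℝ ∙ d)) / Rp d z X *
          (sigv y (X ⊔ (ℝ ∙ z) ⊔ (ℝ ∙ d)) / sigv d (X ⊔ (ℝ ∙ z))) := by
  have hsup : X ⊔ (ℝ ∙ z) ⊔ (ℝ ∙ d) = X ⊔ (ℝ ∙ d) ⊔ (ℝ ∙ z) := sup_right_comm _ _ _
  have : HasOrthogonalProjection (X ⊔ (ℝ ∙ d) ⊔ (ℝ ∙ z)) := hsup ▸ inferInstance
  have hf : fp y z (X ⊔ (ℝ ∙ d)) * sigv y (X ⊔ (ℝ ∙ z) ⊔ (ℝ ∙ d)) =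
      betaReg y z (X ⊔ (ℝ ∙ d)) * sigv z (X ⊔ (ℝ ∙ d)) := by
    rw [resid_congr hsup] at hy3
    rw [sigv, resid_congr hsup]
    exact fp_mul_sigv_sup_span_singleton _ z hy3 hz2
  have hnorm := norm_resid_sup_span_singleton_mul_comm X d z
  have hD := norm_ne_zero_iff.2 hd
  have hZ := norm_ne_zero_iff.2 hz
  have hDZ := norm_ne_zero_iff.2 hd2
  rw [div_eq_iff hdz, inner_resid_eq_betaReg_add_betaReg X d z y hd2 hz2, div_mul_div_comm, hf,
    Rp, sigv, sigv]
  field_simp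
  linear_combination betaReg y z (X ⊔ (ℝ ∙ d)) * ‖resid X z‖ * hnorm

/-- relation between the TSLS and OLS estimands. -/
theorem tsls_ols_relation [CompleteSpace H]
    (X : Submodule ℝ H) [CompleteSpace X] (y d z : H)
    [CompleteSpace ↥(X ⊔ (ℝ ∙ z))] [CompleteSpace ↥(X ⊔ (ℝ ∙ d))]
    [CompleteSpace ↥(X ⊔ (ℝ ∙ z) ⊔ (ℝ ∙ d))]
    (hy : resid X y ≠ 0) (hd : resid X d ≠ 0) (hz : resid X z ≠ 0)
    (hdz : ⟪resid X d, resid X z⟫ ≠ 0)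
    (hd2 : resid (X ⊔ (ℝ ∙ z)) d ≠ 0)
    (hy3 : resid (X ⊔ (ℝ ∙ z) ⊔ (ℝ ∙ d)) y ≠ 0)
    (hz2 : resid (X ⊔ (ℝ ∙ d)) z ≠ 0) :
    ⟪resid X y, resid X z⟫ / ⟪resid X d, resid X z⟫ =
      betaReg y d (X ⊔ (ℝ ∙ z)) +
        fp y z (X ⊔ (ℝ ∙ d)) / Rp d z X *
          (sigv y (X ⊔ (ℝ ∙ z) ⊔ (ℝ ∙ d)) / sigv d (X ⊔ (ℝ ∙ z))) :=
  tsls_ols_relation_general X y d z hd hz hdz hd2 hy3 hz2
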